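/- Inversion for implication: if ⊢^α_1 Γ ⇒ B₀ → B₁ in the infinitary intuitionistic calculus, then ⊢^α_1 Γ, B₀ ⇒ B₁. -/

import Mathlib

open Ordinal

/-- Sentences of the language `L_HA(I)`: closed equations `t = s` (closed terms
identified with their numeral values), atoms `I(t)`, propositional connectives, and
quantifiers represented by their ω-many numeral instances. -/
inductive Sent : Type
  | eq (n m : ℕ)           -- the closed equation `n̄ = m̄`
  | I (t : ℕ)              -- the atom `I(t̄)`
  | or (A B : Sent)
  | and (A B : Sent)
  | imp (A B : Sent)
  | ex (B : ℕ → Sent)      -- `∃x B(x)`, given by its instances `B(n̄)`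
  | all (B : ℕ → Sent)     -- `∀x B(x)`, given by its instances `B(n̄)`

/-- The predicate symbol `I` occurs in the sentence. -/
def containsI : Sent → Prop
  | .eq _ _ => False
  | .I _ => True
  | .or A B => containsI A ∨ containsI B
  | .and A B => containsI A ∨ containsI B
  | .imp A B => containsI A ∨ containsI B
  | .ex B => ∃ n, containsI (B n)
  | .all B => ∃ n, containsI (B n)

/-- Rank `0` sentences: sentences of `L_HA`, i.e. not containing `I`. -/
def rankZero (A : Sent) : Prop := ¬ containsI A

/-- `Deriv Φop cutOK α Γ C` : in the infinitary sequent calculus (ω-rules for `L∃`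
and `R∀`, rules `LI`/`RI` unfolding `I(t)` to `Φop t = Φ(I,t)`), the sequent
`Γ ⇒ C` has a derivation of depth `≤ α` in which every cut formula satisfies
`cutOK`.  Initial sequents: `Γ, I(t) ⇒ I(t)`; `Γ, ⊥ ⇒ A`; `Γ ⇒ ⊤`. -/
inductive Deriv (Φop : ℕ → Sent) (cutOK : Sent → Prop) :
    Ordinal → Set Sent → Sent → Prop
  | axI {α Γ t} : Sent.I t ∈ Γ → Deriv Φop cutOK α Γ (.I t)
  | axBot {α Γ C n m} : n ≠ m → Sent.eq n m ∈ Γ → Deriv Φop cutOK α Γ C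
  | axTop {α Γ n} : Deriv Φop cutOK α Γ (.eq n n)
  | orL {α γ₀ γ₁ Γ A₀ A₁ C} : γ₀ < α → γ₁ < α →
      Deriv Φop cutOK γ₀ (insert A₀ Γ) C → Deriv Φop cutOK γ₁ (insert A₁ Γ) C →
      Deriv Φop cutOK α (insert (.or A₀ A₁) Γ) C
  | orR₀ {α γ Γ A₀ A₁} : γ < α → Deriv Φop cutOK γ Γ A₀ →
      Deriv Φop cutOK α Γ (.or A₀ A₁)
  | orR₁ {α γ Γ A₀ A₁} : γ < α → Deriv Φop cutOK γ Γ A₁ →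
      Deriv Φop cutOK α Γ (.or A₀ A₁)
  | andL₀ {α γ Γ A₀ A₁ C} : γ < α →
      Deriv Φop cutOK γ (insert A₀ (insert (.and A₀ A₁) Γ)) C →
      Deriv Φop cutOK α (insert (.and A₀ A₁) Γ) C
  | andL₁ {α γ Γ A₀ A₁ C} : γ < α →
      Deriv Φop cutOK γ (insert A₁ (insert (.and A₀ A₁) Γ)) C →
      Deriv Φop cutOK α (insert (.and A₀ A₁) Γ) C
  | andR {α γ₀ γ₁ Γ A₀ A₁} : γ₀ < α → γ₁ < α →
      Deriv Φop cutOK γ₀ Γ A₀ → Deriv Φop cutOK γ₁ Γ A₁ →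
      Deriv Φop cutOK α Γ (.and A₀ A₁)
  | impL {α γ₀ γ₁ Γ A B C} : γ₀ < α → γ₁ < α →
      Deriv Φop cutOK γ₀ (insert (.imp A B) Γ) A →
      Deriv Φop cutOK γ₁ (insert B Γ) C →
      Deriv Φop cutOK α (insert (.imp A B) Γ) C
  | impR {α γ Γ A B} : γ < α → Deriv Φop cutOK γ (insert A Γ) B →
      Deriv Φop cutOK α Γ (.imp A B)
  | exL {α Γ B C} (γ : ℕ → Ordinal) : (∀ n, γ n < α) →
      (∀ n, Deriv Φop cutOK (γ n) (insert (B n) Γ) C) →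
      Deriv Φop cutOK α (insert (.ex B) Γ) C
  | exR {α γ Γ B} (n : ℕ) : γ < α → Deriv Φop cutOK γ Γ (B n) →
      Deriv Φop cutOK α Γ (.ex B)
  | allL {α γ Γ B C} (n : ℕ) : γ < α →
      Deriv Φop cutOK γ (insert (B n) (insert (.all B) Γ)) C →
      Deriv Φop cutOK α (insert (.all B) Γ) C
  | allR {α Γ B} (γ : ℕ → Ordinal) : (∀ n, γ n < α) →
      (∀ n, Deriv Φop cutOK (γ n) Γ (B n)) →
      Deriv Φop cutOK α Γ (.all B)
  | LI {α γ Γ t C} : γ < α → Deriv Φop cutOK γ (insert (Φop t) Γ) C →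
      Deriv Φop cutOK α (insert (.I t) Γ) C
  | RI {α γ Γ t} : γ < α → Deriv Φop cutOK γ Γ (Φop t) →
      Deriv Φop cutOK α Γ (.I t)
  | cut {α γ₀ γ₁ Γ Δ A C} : cutOK A → γ₀ < α → γ₁ < α →
      Deriv Φop cutOK γ₀ Γ A → Deriv Φop cutOK γ₁ (insert A Δ) C →
      Deriv Φop cutOK α (Γ ∪ Δ) C

/-- `⊢^α_1 Γ ⇒ C` : derivability with depth `≤ α` and all cut formulas of rank `0`. -/
def Deriv1 (Φop : ℕ → Sent) (α : Ordinal) (Γ : Set Sent) (C : Sent) : Prop :=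
  Deriv Φop rankZero α Γ C

/-!
Induction on the derivation, generalised to every antecedent containing `Γ, B₀`. A derivation
of `Γ ⇒ B₀ → B₁` ends either in `impR`, whose premise is the sequent wanted, or in a rule acting
on the antecedent (a left rule, a cut, a `⊥`-axiom), which commutes with adding `B₀`. No rule is
added, so depth and cut formulas are preserved; the premises that keep their own succedent (the
left premise of `impL`, the left premise of a cut) are only weakened.
-/

section

open Set

variable {Φop : ℕ → Sent} {P : Sent → Prop}

theorem Set.insert_comm_subset {X : Type*} {a b : X} {s t : Set X} (h : insert a s ⊆ t) :
    insert a (insert b s) ⊆ insert b t :=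
  (insert_comm a b s).subset.trans (insert_subset_insert h)

namespace Deriv

theorem mono {α β : Ordinal} {Γ : Set Sent} {C : Sent}
    (h : Deriv Φop P α Γ C) (hαβ : α ≤ β) : Deriv Φop P β Γ C := by
  cases h with
  | axI hmem => exact .axI hmem
  | axBot hnm hmem => exact .axBot hnm hmem
  | axTop => exact .axTop
  | orL h₀ h₁ d₀ d₁ => exact .orL (h₀.trans_le hαβ) (h₁.trans_le hαβ) d₀ d₁
  | orR₀ h₀ d₀ => exact .orR₀ (h₀.trans_le hαβ) d₀
  | orR₁ h₀ d₀ => exact .orR₁ (h₀.trans_le hαβ) d₀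
  | andL₀ h₀ d₀ => exact .andL₀ (h₀.trans_le hαβ) d₀
  | andL₁ h₀ d₀ => exact .andL₁ (h₀.trans_le hαβ) d₀
  | andR h₀ h₁ d₀ d₁ => exact .andR (h₀.trans_le hαβ) (h₁.trans_le hαβ) d₀ d₁
  | impL h₀ h₁ d₀ d₁ => exact .impL (h₀.trans_le hαβ) (h₁.trans_le hαβ) d₀ d₁
  | impR h₀ d₀ => exact .impR (h₀.trans_le hαβ) d₀
  | exL γ hγ d => exact .exL γ (fun n => (hγ n).trans_le hαβ) d
  | exR n h₀ d₀ => exact .exR n (h₀.trans_le hαβ) d₀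
  | allL n h₀ d₀ => exact .allL n (h₀.trans_le hαβ) d₀
  | allR γ hγ d => exact .allR γ (fun n => (hγ n).trans_le hαβ) d
  | LI h₀ d₀ => exact .LI (h₀.trans_le hαβ) d₀
  | RI h₀ d₀ => exact .RI (h₀.trans_le hαβ) d₀
  | cut hA h₀ h₁ d₀ d₁ =>
    exact .cut hA (h₀.trans_le hαβ) (h₁.trans_le hαβ) d₀ d₁

variable {α : Ordinal} {Γ : Set Sent} {C : Sent}

theorem orL_of_mem {γ₀ γ₁ : Ordinal} {A₀ A₁ : Sent} (hmem : .or A₀ A₁ ∈ Γ)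
    (h₀ : γ₀ < α) (h₁ : γ₁ < α) (d₀ : Deriv Φop P γ₀ (insert A₀ Γ) C)
    (d₁ : Deriv Φop P γ₁ (insert A₁ Γ) C) : Deriv Φop P α Γ C :=
  insert_eq_of_mem hmem ▸ orL h₀ h₁ d₀ d₁

theorem andL₀_of_mem {γ : Ordinal} {A₀ A₁ : Sent} (hmem : .and A₀ A₁ ∈ Γ)
    (h : γ < α) (d : Deriv Φop P γ (insert A₀ Γ) C) : Deriv Φop P α Γ C := by
  rw [← insert_eq_of_mem hmem]
  exact andL₀ h (by rwa [insert_eq_of_mem hmem])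

theorem andL₁_of_mem {γ : Ordinal} {A₀ A₁ : Sent} (hmem : .and A₀ A₁ ∈ Γ)
    (h : γ < α) (d : Deriv Φop P γ (insert A₁ Γ) C) : Deriv Φop P α Γ C := by
  rw [← insert_eq_of_mem hmem]
  exact andL₁ h (by rwa [insert_eq_of_mem hmem])

theorem impL_of_mem {γ₀ γ₁ : Ordinal} {A B : Sent} (hmem : .imp A B ∈ Γ)
    (h₀ : γ₀ < α) (h₁ : γ₁ < α) (d₀ : Deriv Φop P γ₀ Γ A)
    (d₁ : Deriv Φop P γ₁ (insert B Γ) C) : Deriv Φop P α Γ C := by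
  rw [← insert_eq_of_mem hmem] at d₀ ⊢
  exact impL h₀ h₁ d₀ d₁

theorem exL_of_mem {B : ℕ → Sent} (γ : ℕ → Ordinal) (hmem : .ex B ∈ Γ)
    (hγ : ∀ n, γ n < α) (d : ∀ n, Deriv Φop P (γ n) (insert (B n) Γ) C) :
    Deriv Φop P α Γ C :=
  insert_eq_of_mem hmem ▸ exL γ hγ d

theorem allL_of_mem {γ : Ordinal} {B : ℕ → Sent} (n : ℕ) (hmem : .all B ∈ Γ)
    (h : γ < α) (d : Deriv Φop P γ (insert (B n) Γ) C) : Deriv Φop P α Γ C := by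
  rw [← insert_eq_of_mem hmem]
  exact allL n h (by rwa [insert_eq_of_mem hmem])

theorem LI_of_mem {γ : Ordinal} {t : ℕ} (hmem : .I t ∈ Γ) (h : γ < α)
    (d : Deriv Φop P γ (insert (Φop t) Γ) C) : Deriv Φop P α Γ C :=
  insert_eq_of_mem hmem ▸ LI h d

theorem weaken {Δ : Set Sent} (h : Deriv Φop P α Γ C) (hΓΔ : Γ ⊆ Δ) :
    Deriv Φop P α Δ C := by
  induction h generalizing Δ with
  | axI hmem => exact .axI (hΓΔ hmem)
  | axBot hnm hmem => exact .axBot hnm (hΓΔ hmem)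
  | axTop => exact .axTop
  | orL h₀ h₁ _ _ ih₀ ih₁ =>
    have hΓ := (subset_insert _ _).trans hΓΔ
    exact orL_of_mem (hΓΔ (mem_insert _ _)) h₀ h₁
      (ih₀ (insert_subset_insert hΓ)) (ih₁ (insert_subset_insert hΓ))
  | orR₀ h₀ _ ih => exact .orR₀ h₀ (ih hΓΔ)
  | orR₁ h₀ _ ih => exact .orR₁ h₀ (ih hΓΔ)
  | andL₀ h₀ _ ih =>
    exact andL₀_of_mem (hΓΔ (mem_insert _ _)) h₀ (ih (insert_subset_insert hΓΔ))
  | andL₁ h₀ _ ih =>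
    exact andL₁_of_mem (hΓΔ (mem_insert _ _)) h₀ (ih (insert_subset_insert hΓΔ))
  | andR h₀ h₁ _ _ ih₀ ih₁ => exact .andR h₀ h₁ (ih₀ hΓΔ) (ih₁ hΓΔ)
  | impL h₀ h₁ _ _ ih₀ ih₁ =>
    exact impL_of_mem (hΓΔ (mem_insert _ _)) h₀ h₁ (ih₀ hΓΔ)
      (ih₁ (insert_subset_insert ((subset_insert _ _).trans hΓΔ)))
  | impR h₀ _ ih => exact .impR h₀ (ih (insert_subset_insert hΓΔ))
  | exL γ hγ _ ih =>
    exact exL_of_mem γ (hΓΔ (mem_insert _ _)) hγ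
      (fun n => ih n (insert_subset_insert ((subset_insert _ _).trans hΓΔ)))
  | exR n h₀ _ ih => exact .exR n h₀ (ih hΓΔ)
  | allL n h₀ _ ih =>
    exact allL_of_mem n (hΓΔ (mem_insert _ _)) h₀ (ih (insert_subset_insert hΓΔ))
  | allR γ hγ _ ih => exact .allR γ hγ (fun n => ih n hΓΔ)
  | LI h₀ _ ih =>
    exact LI_of_mem (hΓΔ (mem_insert _ _)) h₀
      (ih (insert_subset_insert ((subset_insert _ _).trans hΓΔ)))
  | RI h₀ _ ih => exact .RI h₀ (ih hΓΔ)
  | cut hA h₀ h₁ _ _ ih₀ ih₁ =>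
    have hΔ := union_subset_iff.mp hΓΔ
    exact union_self Δ ▸ cut hA h₀ h₁ (ih₀ hΔ.1) (ih₁ (insert_subset_insert hΔ.2))

theorem inversion_imp_of_subset {Δ : Set Sent} {B₀ B₁ : Sent}
    (h : Deriv Φop P α Γ (.imp B₀ B₁)) (hΓΔ : insert B₀ Γ ⊆ Δ) :
    Deriv Φop P α Δ B₁ := by
  generalize hC : Sent.imp B₀ B₁ = C at h
  induction h generalizing Δ with
  | axI | axTop | orR₀ | orR₁ | andR | exR | allR | RI => cases hC
  | axBot hnm hmem => exact .axBot hnm (hΓΔ (mem_insert_of_mem _ hmem))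
  | impR h₀ d₀ =>
    cases hC
    exact (d₀.weaken hΓΔ).mono h₀.le
  | orL h₀ h₁ _ _ ih₀ ih₁ =>
    have hB₀Γ := (insert_subset_insert (subset_insert _ _)).trans hΓΔ
    exact orL_of_mem (hΓΔ (mem_insert_of_mem _ (mem_insert ..))) h₀ h₁
      (ih₀ (insert_comm_subset hB₀Γ) hC) (ih₁ (insert_comm_subset hB₀Γ) hC)
  | andL₀ h₀ _ ih =>
    exact andL₀_of_mem (hΓΔ (mem_insert_of_mem _ (mem_insert ..))) h₀
      (ih (insert_comm_subset hΓΔ) hC)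
  | andL₁ h₀ _ ih =>
    exact andL₁_of_mem (hΓΔ (mem_insert_of_mem _ (mem_insert ..))) h₀
      (ih (insert_comm_subset hΓΔ) hC)
  | impL h₀ h₁ d₀ _ _ ih₁ =>
    have hB₀Γ := (insert_subset_insert (subset_insert _ _)).trans hΓΔ
    exact impL_of_mem (hΓΔ (mem_insert_of_mem _ (mem_insert ..))) h₀ h₁
      (d₀.weaken ((subset_insert _ _).trans hΓΔ)) (ih₁ (insert_comm_subset hB₀Γ) hC)
  | exL γ hγ _ ih =>
    have hB₀Γ := (insert_subset_insert (subset_insert _ _)).trans hΓΔ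
    exact exL_of_mem γ (hΓΔ (mem_insert_of_mem _ (mem_insert ..))) hγ
      (fun n => ih n (insert_comm_subset hB₀Γ) hC)
  | allL n h₀ _ ih =>
    exact allL_of_mem n (hΓΔ (mem_insert_of_mem _ (mem_insert ..))) h₀
      (ih (insert_comm_subset hΓΔ) hC)
  | LI h₀ _ ih =>
    have hB₀Γ := (insert_subset_insert (subset_insert _ _)).trans hΓΔ
    exact LI_of_mem (hΓΔ (mem_insert_of_mem _ (mem_insert ..))) h₀
      (ih (insert_comm_subset hB₀Γ) hC)
  | cut hA h₀ h₁ d₀ _ _ ih₁ =>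
    have hΔ := union_subset_iff.mp ((subset_insert _ _).trans hΓΔ)
    have hB₀Γ : insert B₀ _ ⊆ Δ := insert_subset (hΓΔ (mem_insert ..)) hΔ.2
    exact union_self Δ ▸
      cut hA h₀ h₁ (d₀.weaken hΔ.1) (ih₁ (insert_comm_subset hB₀Γ) hC)

end Deriv

end

/-- Inversion for implication: if `⊢^α_1 Γ ⇒ B₀ → B₁` then `⊢^α_1 Γ, B₀ ⇒ B₁`. -/
theorem inversion_imp (Φop : ℕ → Sent) {α : Ordinal} {Γ : Set Sent} {B₀ B₁ : Sent}
    (h : Deriv1 Φop α Γ (.imp B₀ B₁)) : Deriv1 Φop α (insert B₀ Γ) B₁ :=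
  h.inversion_imp_of_subset subset_rfl
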